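/- arXiv:2403.02071 — 6 statements merged into one kernel-verified Lean document; each statement's English description precedes it below -/
import Mathlib

section
/- Let S ∈ ℝⁿ, T ∈ ℝ, β > 0. For all x in the polytope P = {x ∈ ℝⁿ : Sᵀx ≤ T, 0 ≤ xᵢ ≤ 1 for all i}, the objective xᵀ(x − 1_n) + β·Sᵀx is at most β·T, with equality attained for some x ∈ P if and only if there exists x ∈ {0,1}ⁿ with Sᵀx = T and Sᵀx ≤ T, i.e., the subset sum problem SSP(S,T) has a solution. -/
theorem stmt_1 (n : ℕ) (S : EuclideanSpace ℝ (Fin n)) (T β : ℝ) (hβ : 0 < β)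
    (ones : EuclideanSpace ℝ (Fin n)) (hones : ∀ i, ones i = 1)
    (P : Set (EuclideanSpace ℝ (Fin n)))
    (hP : P = {x | inner ℝ S x ≤ T ∧ ∀ i, 0 ≤ x i ∧ x i ≤ 1}) :
    (∀ x ∈ P, (inner ℝ x (x - ones) : ℝ) + β * inner ℝ S x ≤ β * T) ∧
    ((∃ x ∈ P, (inner ℝ x (x - ones) : ℝ) + β * inner ℝ S x = β * T) ↔
      (∃ x : EuclideanSpace ℝ (Fin n), (∀ i, x i = 0 ∨ x i = 1) ∧
        (inner ℝ S x : ℝ) = T ∧ (inner ℝ S x : ℝ) ≤ T)) := by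
  subst hP
  have hin : ∀ (x : EuclideanSpace ℝ (Fin n)),
      (inner ℝ x (x - ones) : ℝ) = ∑ i, x i * (x i - 1) := by
    intro x
    rw [PiLp.inner_apply]
    refine Finset.sum_congr rfl fun i _ => ?_
    simp [hones i, mul_comm]
  have hnonpos : ∀ (x : EuclideanSpace ℝ (Fin n)), (∀ i, 0 ≤ x i ∧ x i ≤ 1) →
      ∀ i ∈ Finset.univ, x i * (x i - 1) ≤ 0 := by
    intro x hx i _
    exact mul_nonpos_of_nonneg_of_nonpos (hx i).1 (by linarith [(hx i).2])
  constructor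
  · rintro x ⟨hxT, hx⟩
    have h1 : (inner ℝ x (x - ones) : ℝ) ≤ 0 := by
      rw [hin]
      exact Finset.sum_nonpos (hnonpos x hx)
    nlinarith
  · constructor
    · rintro ⟨x, ⟨hxT, hx⟩, heq⟩
      have h1 : (inner ℝ x (x - ones) : ℝ) ≤ 0 := by
        rw [hin]
        exact Finset.sum_nonpos (hnonpos x hx)
      have h2 : (inner ℝ S x : ℝ) = T := by nlinarith
      have h3 : (inner ℝ x (x - ones) : ℝ) = 0 := by nlinarith
      refine ⟨x, ?_, h2, le_of_eq h2⟩
      rw [hin] at h3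
      have := (Finset.sum_eq_zero_iff_of_nonpos (hnonpos x hx)).mp h3
      intro i
      have h0 := this i (Finset.mem_univ i)
      rcases mul_eq_zero.mp h0 with h | h
      · exact Or.inl h
      · exact Or.inr (by linarith)
    · rintro ⟨x, hx01, hxT, hle⟩
      have hx : ∀ i, 0 ≤ x i ∧ x i ≤ 1 := by
        intro i; rcases hx01 i with h | h <;> simp [h]
      refine ⟨x, ⟨hle, hx⟩, ?_⟩
      have h3 : (inner ℝ x (x - ones) : ℝ) = 0 := by
        rw [hin]
        refine Finset.sum_eq_zero fun i _ => ?_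
        rcases hx01 i with h | h <;> simp [h]
      rw [h3, hxT]; ring
end

section
/- Suppose Q = {x : h(x) ≤ 0} is nonempty and compact, and let H* = argmin_{h(x) ≤ 1} (h(x) − g_λ(x)). If H* ⊆ int(Q), then R₀ := max_{x ∈ Q} ‖x − C₀‖ satisfies R₀ = min{R ≥ 0 : Q_{R²} ⊆ Q}. -/
lemma seg_norm_sq' {n : ℕ} (a b c : EuclideanSpace ℝ (Fin n)) (t : ℝ) :
    ‖((1-t)•a + t•b) - c‖^2
      = (1-t)*‖a-c‖^2 + t*‖b-c‖^2 - t*(1-t)*‖a-b‖^2 := by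
  have hv : ((1-t)•a + t•b) - c = (1-t)•(a-c) + t•(b-c) := by module
  have hab : a - b = (a-c) - (b-c) := by abel
  rw [hv, hab]
  generalize (a - c) = u
  generalize (b - c) = v
  rw [norm_add_sq_real, norm_sub_sq_real, norm_smul, norm_smul,
    real_inner_smul_left, real_inner_smul_right, Real.norm_eq_abs, Real.norm_eq_abs,
    mul_pow, mul_pow, sq_abs, sq_abs]
  ring

set_option maxHeartbeats 1000000

theorem stmt_7 (n m : ℕ) [NeZero m] (C : Fin m → EuclideanSpace ℝ (Fin n))
    (C₀ : EuclideanSpace ℝ (Fin n)) (r : Fin m → ℝ) (hr : ∀ k, 0 < r k)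
    (lam : ℝ) (hlam : lam ∈ Set.Ioo (0:ℝ) 1)
    (h g : EuclideanSpace ℝ (Fin n) → ℝ)
    (hh : ∀ x, h x = Finset.univ.sup' Finset.univ_nonempty
      (fun k : Fin m => ‖x - C k‖^2 - (r k)^2))
    (hg : ∀ x, g x = lam * ‖x - C₀‖^2)
    (Q : Set (EuclideanSpace ℝ (Fin n))) (hQ : Q = {x | h x ≤ 0})
    (hQne : Q.Nonempty) (hQc : IsCompact Q)
    (Hstar : Set (EuclideanSpace ℝ (Fin n)))
    (hHstar : Hstar = {y | h y ≤ 1 ∧ ∀ z, h z ≤ 1 → h y - g y ≤ h z - g z})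
    (hint : Hstar ⊆ interior Q)
    (QR : ℝ → Set (EuclideanSpace ℝ (Fin n)))
    (hQR : ∀ R, QR R = {x | h x - g x ≤ -lam * R^2})
    (R₀ : ℝ) (hR₀ : IsGreatest ((fun x => ‖x - C₀‖) '' Q) R₀) :
    IsLeast {R : ℝ | 0 ≤ R ∧ QR R ⊆ Q} R₀ := by
  obtain ⟨hlam0, hlam1⟩ := hlam
  -- continuity of h and g
  have hcont_h : Continuous h := by
    have : Continuous fun x : EuclideanSpace ℝ (Fin n) =>
        Finset.univ.sup' Finset.univ_nonempty (fun k : Fin m => ‖x - C k‖^2 - (r k)^2) := by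
      apply Continuous.finset_sup'_apply
      intro k _
      fun_prop
    simpa only [← hh] using this
  have hcont_g : Continuous g := by
    have : Continuous fun x : EuclideanSpace ℝ (Fin n) => lam * ‖x - C₀‖^2 := by fun_prop
    simpa only [← hg] using this
  -- points of Q are within distance R₀ of C₀
  have hQle : ∀ x ∈ Q, ‖x - C₀‖ ≤ R₀ := fun x hx => hR₀.2 ⟨x, hx, rfl⟩
  obtain ⟨xs, hxsQ, hxsn⟩ := hR₀.1
  have hxsn' : ‖xs - C₀‖ = R₀ := hxsn
  have hR₀0 : 0 ≤ R₀ := hxsn' ▸ norm_nonneg _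
  -- convexity of h - g along segments
  have hconv : ∀ (a b : EuclideanSpace ℝ (Fin n)) (t : ℝ), 0 ≤ t → t ≤ 1 →
      h ((1-t)•a + t•b) - g ((1-t)•a + t•b) ≤ (1-t)*(h a - g a) + t*(h b - g b) := by
    intro a b t ht0 ht1
    simp only [hh, hg, seg_norm_sq']
    have hs : (Finset.univ.sup' Finset.univ_nonempty (fun k : Fin m =>
        (1-t)*‖a - C k‖^2 + t*‖b - C k‖^2 - t*(1-t)*‖a-b‖^2 - (r k)^2)) ≤
        (1-t) * (Finset.univ.sup' Finset.univ_nonempty (fun k : Fin m => ‖a - C k‖^2 - (r k)^2))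
        + t * (Finset.univ.sup' Finset.univ_nonempty (fun k : Fin m => ‖b - C k‖^2 - (r k)^2))
        - t*(1-t)*‖a-b‖^2 := by
      apply Finset.sup'_le
      intro k _
      have hA : ‖a - C k‖^2 - (r k)^2 ≤ Finset.univ.sup' Finset.univ_nonempty
          (fun k : Fin m => ‖a - C k‖^2 - (r k)^2) :=
        Finset.le_sup' (fun k : Fin m => ‖a - C k‖^2 - (r k)^2) (Finset.mem_univ k)
      have hB : ‖b - C k‖^2 - (r k)^2 ≤ Finset.univ.sup' Finset.univ_nonempty
          (fun k : Fin m => ‖b - C k‖^2 - (r k)^2) :=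
        Finset.le_sup' (fun k : Fin m => ‖b - C k‖^2 - (r k)^2) (Finset.mem_univ k)
      nlinarith [hA, hB]
    nlinarith [hs, mul_nonneg (mul_nonneg (mul_nonneg ht0 (by linarith : (0:ℝ) ≤ 1 - t))
      (by linarith : (0:ℝ) ≤ 1 - lam)) (sq_nonneg ‖a-b‖)]
  -- interior points have h < 0
  have hintlt : ∀ y, y ∈ interior Q → h y < 0 := by
    intro y hy
    have hyQ : h y ≤ 0 := by have := interior_subset hy; rwa [hQ] at this
    rcases hyQ.lt_or_eq with hlt | heq
    · exact hlt
    exfalso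
    obtain ⟨k, -, hk⟩ := Finset.exists_mem_eq_sup' (Finset.univ_nonempty)
      (fun k : Fin m => ‖y - C k‖^2 - (r k)^2)
    have hk2 : ‖y - C k‖^2 = (r k)^2 := by
      have := (hh y).trans hk
      linarith [heq ▸ this]
    have hnorm : ‖y - C k‖ = r k := (sq_eq_sq₀ (norm_nonneg _) (hr k).le).mp hk2
    obtain ⟨ε, hε, hball⟩ := Metric.isOpen_iff.mp isOpen_interior y hy
    set s : ℝ := ε / (2 * r k) with hs
    have hs0 : 0 < s := div_pos hε (mul_pos two_pos (hr k))
    set z : EuclideanSpace ℝ (Fin n) := y + s • (y - C k) with hz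
    have hzC : z - C k = (1+s) • (y - C k) := by rw [hz]; module
    have hzy : z - y = s • (y - C k) := by rw [hz]; abel
    have hkey : s * (2 * r k) = ε := by
      rw [hs, div_mul_cancel₀ _ (mul_pos two_pos (hr k)).ne']
    have hzball : z ∈ Metric.ball y ε := by
      rw [Metric.mem_ball, dist_eq_norm, hzy, norm_smul, Real.norm_eq_abs,
        abs_of_pos hs0, hnorm]
      nlinarith [hkey, hr k, hs0, mul_pos hs0 (hr k)]
    have hzQ : h z ≤ 0 := by
      have := interior_subset (hball hzball); rwa [hQ] at this
    have hterm : ‖z - C k‖^2 - (r k)^2 ≤ h z := by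
      rw [hh]
      exact Finset.le_sup' (fun k : Fin m => ‖z - C k‖^2 - (r k)^2) (Finset.mem_univ k)
    rw [hzC, norm_smul, Real.norm_eq_abs, abs_of_pos (by linarith : (0:ℝ) < 1 + s),
      hnorm] at hterm
    nlinarith [hzQ, hterm, mul_pos (mul_pos hs0 (hr k)) (hr k), sq_nonneg (s * r k)]
  -- {h ≤ 1} is compact
  have hclosed : IsClosed {x : EuclideanSpace ℝ (Fin n) | h x ≤ 1} :=
    isClosed_le hcont_h continuous_const
  have hbdd : Bornology.IsBounded {x : EuclideanSpace ℝ (Fin n) | h x ≤ 1} := by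
    have hk0 : 0 < m := Nat.pos_of_ne_zero (NeZero.ne m)
    set k0 : Fin m := ⟨0, hk0⟩ with hk0def
    apply Metric.isBounded_closedBall (x := C k0) (r := 1 + (r k0)^2) |>.subset
    intro x hx
    have hterm : ‖x - C k0‖^2 - (r k0)^2 ≤ h x := by
      rw [hh]
      exact Finset.le_sup' (fun k : Fin m => ‖x - C k‖^2 - (r k)^2) (Finset.mem_univ k0)
    have hx1 : h x ≤ 1 := hx
    rw [Metric.mem_closedBall, dist_eq_norm]
    nlinarith [norm_nonneg (x - C k0), hr k0]
  have hcpt : IsCompact {x : EuclideanSpace ℝ (Fin n) | h x ≤ 1} :=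
    Metric.isCompact_of_isClosed_isBounded hclosed hbdd
  have hne1 : {x : EuclideanSpace ℝ (Fin n) | h x ≤ 1}.Nonempty := by
    refine ⟨xs, ?_⟩
    have : h xs ≤ 0 := by rw [hQ] at hxsQ; exact hxsQ
    simpa using this.trans (by norm_num)
  obtain ⟨y, hy1, hymin⟩ := hcpt.exists_isMinOn hne1 ((hcont_h.sub hcont_g).continuousOn)
  have hyH : y ∈ Hstar := by
    rw [hHstar]
    exact ⟨hy1, fun z hz => hymin hz⟩
  have hyint : y ∈ interior Q := hint hyH
  have hylt : h y < 0 := hintlt y hyint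
  have hyQ : y ∈ Q := interior_subset hyint
  have hyR : ‖y - C₀‖ ≤ R₀ := hQle y hyQ
  -- the minimum value is strictly below -lam * R₀^2
  have hxs_phi : h xs - g xs ≤ -lam * R₀^2 := by
    have h1 : h xs ≤ 0 := by rw [hQ] at hxsQ; exact hxsQ
    have h2 : g xs = lam * R₀^2 := by rw [hg, hxsn']
    linarith
  have hmu : h y - g y < -lam * R₀^2 := by
    by_contra hc
    push_neg at hc
    have hle : h y - g y ≤ h xs - g xs := hymin (by simpa using (by
      rw [hQ] at hxsQ; exact hxsQ.trans (by norm_num) : h xs ≤ 1))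
    have heq : h xs - g xs = h y - g y := le_antisymm (by linarith) hle
    have hxsH : xs ∈ Hstar := by
      rw [hHstar]
      refine ⟨by rw [hQ] at hxsQ; exact hxsQ.trans (by norm_num), fun z hz => ?_⟩
      rw [heq]; exact hymin hz
    have := hintlt xs (hint hxsH)
    have h2 : g xs = lam * R₀^2 := by rw [hg, hxsn']
    linarith
  constructor
  · -- R₀ is in the set
    refine ⟨hR₀0, ?_⟩
    intro x hx
    rw [hQR] at hx
    have hxphi : h x - g x ≤ -lam * R₀^2 := hx
    rw [hQ]
    by_contra hpos
    simp only [Set.mem_setOf_eq, not_le] at hpos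
    -- hpos : 0 < h x
    set f : ℝ → ℝ := fun t => h ((1-t)•y + t•x) with hf
    have hfc : ContinuousOn f (Set.Icc 0 1) := by
      apply Continuous.continuousOn
      apply hcont_h.comp
      fun_prop
    have hf0 : f 0 = h y := by simp [hf]
    have hf1 : f 1 = h x := by simp [hf]
    have hmem : (0:ℝ) ∈ Set.Icc (f 0) (f 1) := by
      rw [hf0, hf1]; exact ⟨hylt.le, hpos.le⟩
    obtain ⟨t, ht01, hft⟩ := intermediate_value_Icc (by norm_num : (0:ℝ) ≤ 1) hfc hmem
    have ht1 : t < 1 := by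
      rcases lt_or_eq_of_le ht01.2 with hlt | heq
      · exact hlt
      · exfalso; rw [heq, hf1] at hft; linarith
    set z : EuclideanSpace ℝ (Fin n) := (1-t)•y + t•x with hzdef
    have hhz : h z = 0 := hft
    have hzQ : z ∈ Q := by rw [hQ]; exact le_of_eq hhz
    have hzR : ‖z - C₀‖ ≤ R₀ := hQle z hzQ
    have hgz : g z ≤ lam * R₀^2 := by
      rw [hg]
      exact mul_le_mul_of_nonneg_left (pow_le_pow_left₀ (norm_nonneg _) hzR 2) hlam0.le
    have hc : h z - g z ≤ (1-t)*(h y - g y) + t*(h x - g x) := hconv y x t ht01.1 ht01.2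
    have hlt2 : h z - g z < -lam * R₀^2 := by
      have h1t : 0 < 1 - t := by linarith
      have e1 := mul_lt_mul_of_pos_left hmu h1t
      have e2 := mul_le_mul_of_nonneg_left hxphi ht01.1
      nlinarith [hc, e1, e2]
    rw [hhz] at hlt2
    linarith
  · -- minimality
    intro R hR
    obtain ⟨hR0, hRsub⟩ := hR
    by_contra hlt
    push_neg at hlt
    -- hlt : R < R₀
    have hR₀pos : 0 < R₀ := lt_of_le_of_lt hR0 hlt
    have hRR : R^2 < R₀^2 := by nlinarith
    have hxs_lt : h xs - g xs < -lam * R^2 := by nlinarith [hxs_phi]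
    have hc2 : Continuous (fun s : ℝ => xs + s • (xs - C₀)) := by fun_prop
    have hψc : Continuous (fun s : ℝ => h (xs + s • (xs - C₀)) - g (xs + s • (xs - C₀))) :=
      (hcont_h.comp hc2).sub (hcont_g.comp hc2)
    have hopen : IsOpen {s : ℝ | h (xs + s • (xs - C₀)) - g (xs + s • (xs - C₀)) < -lam * R^2} :=
      isOpen_lt hψc continuous_const
    have h0mem : (0:ℝ) ∈ {s : ℝ | h (xs + s • (xs - C₀)) - g (xs + s • (xs - C₀)) < -lam * R^2} := by
      simp only [Set.mem_setOf_eq]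
      simpa using hxs_lt
    obtain ⟨ε, hε, hball⟩ := Metric.isOpen_iff.mp hopen 0 h0mem
    have hsmem : (ε/2) ∈ Metric.ball (0:ℝ) ε := by
      rw [Metric.mem_ball, Real.dist_eq, sub_zero, abs_of_pos (by linarith)]
      linarith
    have hψs : h (xs + (ε/2) • (xs - C₀)) - g (xs + (ε/2) • (xs - C₀)) < -lam * R^2 :=
      hball hsmem
    have hwQR : (xs + (ε/2) • (xs - C₀)) ∈ QR R := by rw [hQR]; exact le_of_lt hψs
    have hwQ : (xs + (ε/2) • (xs - C₀)) ∈ Q := hRsub hwQR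
    have hwR : ‖(xs + (ε/2) • (xs - C₀)) - C₀‖ ≤ R₀ := hQle _ hwQ
    have hwC : (xs + (ε/2) • (xs - C₀)) - C₀ = (1 + ε/2) • (xs - C₀) := by module
    rw [hwC, norm_smul, Real.norm_eq_abs, abs_of_pos (by linarith : (0:ℝ) < 1 + ε/2),
      hxsn'] at hwR
    nlinarith [hwR, hε, hR₀pos]
end

section
/- Suppose Q = {x : h(x) ≤ 0} is nonempty and compact, and let H* = argmin_{h(x) ≤ 1}(h(x) − g_λ(x)). If H* ⊆ int(ℝⁿ \ Q), then R₀ := max_{x ∈ Q} ‖x − C₀‖ satisfies R₀ = max{R ≥ 0 : Q_{R²} ∩ Q ≠ ∅}. -/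
lemma combo_sq {E : Type*} [NormedAddCommGroup E] [InnerProductSpace ℝ E]
    (x y c : E) (t : ℝ) :
    ‖((1-t)•x + t•y) - c‖^2 = (1-t)*‖x-c‖^2 + t*‖y-c‖^2 - t*(1-t)*‖x-y‖^2 := by
  have hz : ((1-t)•x + t•y) - c = (1-t)•(x-c) + t•(y-c) := by
    rw [smul_sub, smul_sub]; module
  have hxy : x - y = (x-c) - (y-c) := by abel
  rw [hz, hxy]
  generalize x - c = a
  generalize y - c = b
  rw [norm_add_sq_real, norm_sub_sq_real, real_inner_smul_left, real_inner_smul_right,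
    norm_smul, norm_smul, Real.norm_eq_abs, Real.norm_eq_abs, mul_pow, mul_pow, sq_abs, sq_abs]
  ring

theorem stmt_8 (n m : ℕ) [NeZero m] (C : Fin m → EuclideanSpace ℝ (Fin n))
    (C₀ : EuclideanSpace ℝ (Fin n)) (r : Fin m → ℝ) (hr : ∀ k, 0 < r k)
    (lam : ℝ) (hlam : lam ∈ Set.Ioo (0:ℝ) 1)
    (h g : EuclideanSpace ℝ (Fin n) → ℝ)
    (hh : ∀ x, h x = Finset.univ.sup' Finset.univ_nonempty
      (fun k : Fin m => ‖x - C k‖^2 - (r k)^2))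
    (hg : ∀ x, g x = lam * ‖x - C₀‖^2)
    (Q : Set (EuclideanSpace ℝ (Fin n))) (hQ : Q = {x | h x ≤ 0})
    (hQne : Q.Nonempty) (hQc : IsCompact Q)
    (Hstar : Set (EuclideanSpace ℝ (Fin n)))
    (hHstar : Hstar = {y | h y ≤ 1 ∧ ∀ z, h z ≤ 1 → h y - g y ≤ h z - g z})
    (hint : Hstar ⊆ interior Qᶜ)
    (QR : ℝ → Set (EuclideanSpace ℝ (Fin n)))
    (hQR : ∀ R, QR R = {x | h x - g x ≤ -lam * R^2})
    (R₀ : ℝ) (hR₀ : IsGreatest ((fun x => ‖x - C₀‖) '' Q) R₀) :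
    IsGreatest {R : ℝ | 0 ≤ R ∧ (QR R ∩ Q).Nonempty} R₀ := by
  obtain ⟨hlam0, hlam1⟩ := hlam
  -- continuity of h and g
  have hhc : Continuous h := by
    have : Continuous fun x : EuclideanSpace ℝ (Fin n) =>
        Finset.univ.sup' Finset.univ_nonempty (fun k : Fin m => ‖x - C k‖^2 - (r k)^2) := by
      exact Continuous.finset_sup'_apply (f := fun (k : Fin m) (a : EuclideanSpace ℝ (Fin n)) =>
        ‖a - C k‖^2 - (r k)^2) Finset.univ_nonempty (fun i _ => by fun_prop)
    exact this.congr fun x => (hh x).symm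
  have hgc : Continuous g := by
    have : Continuous fun x : EuclideanSpace ℝ (Fin n) => lam * ‖x - C₀‖^2 := by fun_prop
    exact this.congr fun x => (hg x).symm
  -- the maximizer x* of the distance over Q
  obtain ⟨xs, hxsQ, hxs⟩ := hR₀.1
  have hR₀0 : 0 ≤ R₀ := hxs ▸ norm_nonneg _
  constructor
  · -- membership
    refine ⟨hR₀0, xs, ?_, hxsQ⟩
    rw [hQR]
    have hxs0 : h xs ≤ 0 := by rw [hQ] at hxsQ; exact hxsQ
    have hxs' : ‖xs - C₀‖ = R₀ := hxs
    have hgxs : g xs = lam * R₀^2 := by rw [hg, hxs']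
    simp only [Set.mem_setOf_eq]
    linarith
  · -- upper bound
    rintro R ⟨hR0, x, hxQR, hxQ⟩
    by_contra hlt
    push_neg at hlt
    rw [hQR] at hxQR
    have hfx : h x - g x ≤ -lam * R^2 := hxQR
    have hx0 : h x ≤ 0 := by rw [hQ] at hxQ; exact hxQ
    -- the sublevel set S = {h ≤ 1} is compact
    set S : Set (EuclideanSpace ℝ (Fin n)) := {z | h z ≤ 1} with hS
    have hSclosed : IsClosed S := isClosed_le hhc continuous_const
    obtain ⟨k₀⟩ : Nonempty (Fin m) := ⟨⟨0, Nat.pos_of_ne_zero (NeZero.ne m)⟩⟩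
    have hSsub : S ⊆ Metric.closedBall (C k₀) (Real.sqrt (1 + (r k₀)^2)) := by
      intro z hz
      have h1 : ‖z - C k₀‖^2 - (r k₀)^2 ≤ h z := by
        rw [hh]
        exact Finset.le_sup' (fun k : Fin m => ‖z - C k‖^2 - (r k)^2) (Finset.mem_univ k₀)
      have h2 : ‖z - C k₀‖^2 ≤ 1 + (r k₀)^2 := by
        have := hz; simp only [hS, Set.mem_setOf_eq] at this; linarith
      rw [Metric.mem_closedBall, dist_eq_norm]
      calc ‖z - C k₀‖ = Real.sqrt (‖z - C k₀‖^2) := (Real.sqrt_sq (norm_nonneg _)).symm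
        _ ≤ Real.sqrt (1 + (r k₀)^2) := Real.sqrt_le_sqrt h2
    have hScompact : IsCompact S :=
      (isCompact_closedBall _ _).of_isClosed_subset hSclosed hSsub
    have hSne : S.Nonempty := ⟨x, by simp only [hS, Set.mem_setOf_eq]; linarith⟩
    -- minimizer of h - g over S
    obtain ⟨y, hyS, hymin⟩ := hScompact.exists_isMinOn hSne ((hhc.sub hgc).continuousOn)
    have hyS' : h y ≤ 1 := hyS
    have hyH : y ∈ Hstar := by
      rw [hHstar]
      exact ⟨hyS', fun z hz => hymin hz⟩
    have hyQ : y ∉ Q := fun hy => (interior_subset (hint hyH)) hy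
    have hy0 : 0 < h y := by
      by_contra hc
      push_neg at hc
      exact hyQ (by rw [hQ]; exact hc)
    have hfy : h y - g y ≤ h x - g x := hymin (show x ∈ S by simp only [hS, Set.mem_setOf_eq]; linarith)
    -- IVT along the segment from x to y
    set φ : ℝ → ℝ := fun t => h ((1-t)•x + t•y) with hφ
    have hφc : ContinuousOn φ (Set.Icc 0 1) := by
      apply Continuous.continuousOn
      apply hhc.comp
      fun_prop
    have hφ0 : φ 0 = h x := by simp [hφ]
    have hφ1 : φ 1 = h y := by simp [hφ]
    have hmem : (0:ℝ) ∈ Set.Icc (φ 0) (φ 1) := by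
      rw [hφ0, hφ1]; exact ⟨hx0, le_of_lt hy0⟩
    obtain ⟨t, ht, hφt⟩ := intermediate_value_Icc zero_le_one hφc hmem
    set z := (1-t)•x + t•y with hzdef
    have hz0 : h z = 0 := hφt
    have hzQ : z ∈ Q := by rw [hQ]; exact le_of_eq hz0
    have hzR : ‖z - C₀‖ ≤ R₀ := hR₀.2 ⟨z, hzQ, rfl⟩
    -- convexity bound: (h-g) z ≤ (1-t)*(h-g) x + t*(h-g) y
    have hconv : h z - g z ≤ (1-t)*(h x - g x) + t*(h y - g y) := by
      have hzle : h z ≤ g z + ((1-t)*(h x - g x) + t*(h y - g y)) := by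
        rw [hh z]
        apply Finset.sup'_le
        intro k _
        have hkx : ‖x - C k‖^2 - (r k)^2 ≤ h x := by
          rw [hh]; exact Finset.le_sup' (fun k : Fin m => ‖x - C k‖^2 - (r k)^2) (Finset.mem_univ k)
        have hky : ‖y - C k‖^2 - (r k)^2 ≤ h y := by
          rw [hh]; exact Finset.le_sup' (fun k : Fin m => ‖y - C k‖^2 - (r k)^2) (Finset.mem_univ k)
        have e1 : ‖z - C k‖^2 = (1-t)*‖x - C k‖^2 + t*‖y - C k‖^2 - t*(1-t)*‖x-y‖^2 :=
          combo_sq x y (C k) t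
        have e2 : g z = lam * ((1-t)*‖x - C₀‖^2 + t*‖y - C₀‖^2 - t*(1-t)*‖x-y‖^2) := by
          rw [hg, combo_sq x y C₀ t]
        have egx : g x = lam * ‖x - C₀‖^2 := hg x
        have egy : g y = lam * ‖y - C₀‖^2 := hg y
        have p1 : (1-t)*(‖x - C k‖^2 - (r k)^2) ≤ (1-t)*h x :=
          mul_le_mul_of_nonneg_left hkx (by linarith [ht.2])
        have p2 : t*(‖y - C k‖^2 - (r k)^2) ≤ t*h y :=
          mul_le_mul_of_nonneg_left hky ht.1
        have hnn : 0 ≤ (1-lam)*(t*((1-t)*‖x-y‖^2)) :=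
          mul_nonneg (by linarith) (mul_nonneg ht.1 (mul_nonneg (by linarith [ht.2]) (sq_nonneg _)))
        rw [e1, e2, egx, egy]
        linarith [p1, p2, hnn]
      linarith
    -- final contradiction
    have hcomb : (1-t)*(h x - g x) + t*(h y - g y) ≤ h x - g x := by
      have := mul_le_mul_of_nonneg_left hfy ht.1
      linarith
    have hfz : h z - g z = -lam * ‖z - C₀‖^2 := by rw [hz0, hg]; ring
    have hzsq : ‖z - C₀‖^2 ≤ R₀^2 := pow_le_pow_left₀ (norm_nonneg _) hzR 2
    have hRsq : R₀^2 < R^2 := by nlinarith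
    have h1 : lam * ‖z - C₀‖^2 ≤ lam * R₀^2 := mul_le_mul_of_nonneg_left hzsq hlam0.le
    have h3 : lam * R₀^2 < lam * R^2 := mul_lt_mul_of_pos_left hRsq hlam0
    linarith [hconv, hcomb, hfx, hfz, h1, h3]
end

section
/- Suppose Q = {x : h(x) ≤ 0} is nonempty and compact, let R̲² = −min_{h(x) ≤ 1}(h(x) − g_λ(x)), and suppose some minimizer y of h − g_λ over {h ≤ 1} lies on ∂Q. Then R̲² ≤ R₀² ≤ R̲²/λ, where R₀ = max_{x ∈ Q} ‖x − C₀‖. -/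
theorem stmt_9 (n m : ℕ) [NeZero m] (C : Fin m → EuclideanSpace ℝ (Fin n))
    (C₀ : EuclideanSpace ℝ (Fin n)) (r : Fin m → ℝ) (hr : ∀ k, 0 < r k)
    (lam : ℝ) (hlam : lam ∈ Set.Ioo (0:ℝ) 1)
    (h g : EuclideanSpace ℝ (Fin n) → ℝ)
    (hh : ∀ x, h x = Finset.univ.sup' Finset.univ_nonempty
      (fun k : Fin m => ‖x - C k‖^2 - (r k)^2))
    (hg : ∀ x, g x = lam * ‖x - C₀‖^2)
    (Q : Set (EuclideanSpace ℝ (Fin n))) (hQ : Q = {x | h x ≤ 0})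
    (hQne : Q.Nonempty) (hQc : IsCompact Q)
    (y : EuclideanSpace ℝ (Fin n)) (hy1 : h y ≤ 1)
    (hymin : ∀ z, h z ≤ 1 → h y - g y ≤ h z - g z)
    (hybd : y ∈ frontier Q)
    (Rlo2 : ℝ) (hRlo2 : Rlo2 = -(h y - g y))
    (R₀ : ℝ) (hR₀ : IsGreatest ((fun x => ‖x - C₀‖) '' Q) R₀) :
    Rlo2 ≤ R₀^2 ∧ R₀^2 ≤ Rlo2 / lam := by
  obtain ⟨hlam0, hlam1⟩ := hlam
  -- h is continuous
  have hcont : Continuous h := by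
    have : Continuous (fun x => Finset.univ.sup' (Finset.univ_nonempty (α := Fin m))
        (fun k : Fin m => ‖x - C k‖^2 - (r k)^2)) := by
      apply Continuous.finset_sup'_apply
      intro i _
      continuity
    exact this.congr (fun x => (hh x).symm)
  -- h y = 0
  have hyQ : y ∈ Q := by
    have : IsClosed Q := by
      rw [hQ]; exact isClosed_le hcont continuous_const
    exact this.closure_subset hybd.1
  have hy0 : h y = 0 := by
    have hle : h y ≤ 0 := by rw [hQ] at hyQ; exact hyQ
    rcases lt_or_eq_of_le hle with hlt | heq
    · exfalso
      have hsub : {x | h x < 0} ⊆ Q := by intro x hx; rw [hQ]; show h x ≤ 0; exact le_of_lt hx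
      have hopen : {x | h x < 0} ⊆ interior Q :=
        interior_maximal hsub (isOpen_lt hcont continuous_const)
      exact hybd.2 (hopen hlt)
    · exact heq
  have hRlo2' : Rlo2 = lam * ‖y - C₀‖^2 := by
    rw [hRlo2, hy0, hg]; ring
  -- y gives lower bound for R₀
  have hyR : ‖y - C₀‖ ≤ R₀ := hR₀.2 ⟨y, hyQ, rfl⟩
  have hynn : (0:ℝ) ≤ ‖y - C₀‖ := norm_nonneg _
  constructor
  · nlinarith [sq_nonneg (‖y - C₀‖), sq_nonneg R₀]
  · obtain ⟨x, hxQ, hxR⟩ := hR₀.1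
    have hx0 : h x ≤ 0 := by rw [hQ] at hxQ; exact hxQ
    have := hymin x (hx0.trans zero_le_one)
    rw [hy0, hg, hg, ← hRlo2'] at *
    have hxR' : ‖x - C₀‖ = R₀ := hxR
    rw [le_div_iff₀ hlam0]
    rw [hxR'] at this
    nlinarith [this, hx0]
end

section
/- Let λ ∈ (0,1), R₀ ≥ 0, and consider the radii recursion r_{k,−i+1}² = (1/(1−λ))·(−λR₀² + (λ/(1−λ))‖C₀ − C_{k,−i}‖² + r_{k,−i}²), together with centers C_{k,−i} = (1−λ)ⁱC_k + (1−(1−λ)ⁱ)C₀. Then for all i ≥ 0, r_{k,0}² = (r_{k,−i}²)/(1−λ)ⁱ + (1 − 1/(1−λ)ⁱ)·R₀² + (1 − (1−λ)ⁱ)·‖C₀ − C_k‖². -/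
theorem stmt_13 (n : ℕ) (Ck C₀ : EuclideanSpace ℝ (Fin n))
    (lam : ℝ) (hlam : lam ∈ Set.Ioo (0:ℝ) 1) (R₀ : ℝ) (hR₀ : 0 ≤ R₀)
    (Cm : ℕ → EuclideanSpace ℝ (Fin n))
    (hCm : ∀ i, Cm i = (1 - lam)^i • Ck + (1 - (1 - lam)^i) • C₀)
    (s : ℕ → ℝ)  -- s i = r_{k,-i}²
    (hs : ∀ i, s i = (1/(1-lam)) * (-lam * R₀^2
        + (lam/(1-lam)) * ‖C₀ - Cm (i+1)‖^2 + s (i+1))) :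
    ∀ i, s 0 = s i / (1-lam)^i + (1 - 1/(1-lam)^i) * R₀^2
        + (1 - (1-lam)^i) * ‖C₀ - Ck‖^2 := by
  have hq : (0:ℝ) < 1 - lam := by linarith [hlam.2]
  have hq0 : (1 - lam) ≠ 0 := ne_of_gt hq
  intro i
  induction i with
  | zero => simp
  | succ i ih =>
    have hnorm : ‖C₀ - Cm (i+1)‖ = (1-lam)^(i+1) * ‖C₀ - Ck‖ := by
      rw [hCm]
      have h2 : C₀ - ((1 - lam)^(i+1) • Ck + (1 - (1 - lam)^(i+1)) • C₀)
          = (1-lam)^(i+1) • (C₀ - Ck) := by module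
      rw [h2, norm_smul, Real.norm_eq_abs, abs_of_pos (pow_pos hq _)]
    rw [ih, hs i, hnorm]
    have hpow : (1-lam)^(i+1) ≠ 0 := pow_ne_zero _ hq0
    field_simp
    ring
end

section
/- With the radii recursion above, r_{k,−i}² − R₀² = (1−λ)ⁱ·(r_k² − R₀² − (1 − (1−λ)ⁱ)·‖C₀ − C_k‖²); in particular r_{k,−i}² → R₀² as i → ∞, and the convergence is exponential with rate (1−λ). -/
open Filter Topology

theorem stmt_14 (n : ℕ) (Ck C₀ : EuclideanSpace ℝ (Fin n))
    (lam : ℝ) (hlam : lam ∈ Set.Ioo (0:ℝ) 1) (R₀ rk : ℝ) (hR₀ : 0 < R₀) (hrk : 0 < rk)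
    (Cm : ℕ → EuclideanSpace ℝ (Fin n))
    (hCm : ∀ i, Cm i = (1 - lam)^i • Ck + (1 - (1 - lam)^i) • C₀)
    (s : ℕ → ℝ)  -- s i = r_{k,-i}²
    (hs0 : s 0 = rk^2)
    (hs : ∀ i, s i = (1/(1-lam)) * (-lam * R₀^2
        + (lam/(1-lam)) * ‖C₀ - Cm (i+1)‖^2 + s (i+1))) :
    (∀ i, s i - R₀^2 = (1-lam)^i * (rk^2 - R₀^2 - (1 - (1-lam)^i) * ‖C₀ - Ck‖^2)) ∧
    Tendsto s atTop (𝓝 (R₀^2)) := by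
  obtain ⟨hl0, hl1⟩ := hlam
  have ht0 : (0:ℝ) < 1 - lam := by linarith
  have htne : (1 - lam) ≠ 0 := ne_of_gt ht0
  have hnorm : ∀ i, ‖C₀ - Cm i‖^2 = ((1-lam)^i)^2 * ‖C₀ - Ck‖^2 := by
    intro i
    have h1 : C₀ - Cm i = (1-lam)^i • (C₀ - Ck) := by
      rw [hCm i]; module
    rw [h1, norm_smul]
    have : |(1-lam)^i| = (1-lam)^i := abs_of_nonneg (by positivity)
    rw [Real.norm_eq_abs, this, mul_pow]
  have hstep : ∀ i, s (i+1) = (1-lam) * s i + lam * R₀^2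
      - (lam/(1-lam)) * ‖C₀ - Cm (i+1)‖^2 := by
    intro i
    have h2 := hs i
    rw [one_div, inv_mul_eq_div, eq_div_iff htne] at h2
    linarith
  set D := ‖C₀ - Ck‖^2 with hD
  have key : ∀ i, s i - R₀^2 = (1-lam)^i * (rk^2 - R₀^2 - (1 - (1-lam)^i) * D) := by
    intro i
    induction i with
    | zero => simp [hs0]
    | succ i ih =>
      rw [hstep i, hnorm (i+1)]
      have hsi : s i = R₀^2 + (1-lam)^i * (rk^2 - R₀^2 - (1 - (1-lam)^i) * D) := by
        linarith
      rw [hsi]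
      field_simp
      ring
  refine ⟨key, ?_⟩
  have habs : |1 - lam| < 1 := by rw [abs_of_pos ht0]; linarith
  have hpow : Tendsto (fun i : ℕ => (1-lam)^i) atTop (𝓝 0) :=
    tendsto_pow_atTop_nhds_zero_of_abs_lt_one habs
  have heq : ∀ i, s i = R₀^2 + (1-lam)^i * (rk^2 - R₀^2 - (1 - (1-lam)^i) * D) := by
    intro i; have := key i; linarith
  have : Tendsto (fun i : ℕ => R₀^2 + (1-lam)^i * (rk^2 - R₀^2 - (1 - (1-lam)^i) * D))
      atTop (𝓝 (R₀^2 + 0 * (rk^2 - R₀^2 - (1 - 0) * D))) := by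
    apply Tendsto.add tendsto_const_nhds
    exact hpow.mul ((tendsto_const_nhds.sub tendsto_const_nhds).sub
      (((tendsto_const_nhds.sub hpow)).mul tendsto_const_nhds))
  simpa [heq] using this.congr (fun i => (heq i).symm)
end
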